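/- arXiv:2205.04388 — 2 statements merged into one kernel-verified Lean document; each statement's English description precedes it below -/
import Mathlib

section
/- Let S and Q be periodic sequences in ℝ, each with an m-point motif and a minimal period. Then there exist t ∈ ℝ and ε ∈ {1, −1} with Q = {ε·x + t : x ∈ S} (i.e., S and Q are isometric in ℝ) if and only if there exists s ∈ ZMod m such that D(Q) = σ_s(D(S)) or D(Q) = σ_s(ρ(D(S))). In other words, the distance list considered up to cyclic permutations and reversal (the smallest distance list SDL) is a complete invariant of periodic sequences up to isometry of ℝ. -/
/-!
Listing the points of a periodic sequence in increasing order gives a strictly increasing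
enumeration `ℤ → ℝ` whose consecutive gaps are the distance list read cyclically. Two strictly
increasing enumerations of the same set differ by a shift of the index, and an enumeration is
determined up to an additive constant by its gaps. Hence `x ↦ x + t` maps `S` onto `Q` for some `t`
exactly when the gaps of `Q` are a shift of those of `S`; for `x ↦ -x + t` the image is enumerated
by `n ↦ t - enum S (-n)`, whose gaps are those of `S` reversed.
-/

/-- A periodic sequence in `ℝ` with an `m`-point motif `p` and period `l`:
the set `{p i + l * j : i ∈ Fin m, j ∈ ℤ}` where `0 ≤ p 0 < p 1 < ⋯ < p (m-1) < l`. -/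
structure PSeq (m : ℕ) where
  m_pos : 0 < m
  l : ℝ
  l_pos : 0 < l
  p : Fin m → ℝ
  p_strict : StrictMono p
  p0_nonneg : 0 ≤ p ⟨0, m_pos⟩
  p_lt : ∀ i, p i < l

namespace PSeq

variable {m : ℕ}

/-- The set of points of the periodic sequence. -/
def pts (S : PSeq m) : Set ℝ := {x | ∃ (i : Fin m) (j : ℤ), x = S.p i + S.l * j}

/-- The period is minimal: the same set of points cannot be produced with a smaller period. -/
def IsMinimal (S : PSeq m) : Prop := ∀ (m' : ℕ) (T : PSeq m'), T.pts = S.pts → S.l ≤ T.l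

/-- The distance list `D` of the periodic sequence, indexed by `ZMod m`:
`D i = p (i+1) - p i` for `i < m - 1`, and `D (m-1) = (p 0 + l) - p (m-1)`. -/
noncomputable def D (S : PSeq m) : ZMod m → ℝ := fun i =>
  letI : NeZero m := ⟨S.m_pos.ne'⟩
  if h : i.val + 1 < m then S.p ⟨i.val + 1, h⟩ - S.p ⟨i.val, i.val_lt⟩
  else S.p ⟨0, S.m_pos⟩ + S.l - S.p ⟨i.val, i.val_lt⟩

end PSeq

/-- The cyclic shift `σ_s` acting on vectors indexed by `ZMod n`: `(σ_s v) i = v (i + s)`. -/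
def shiftVec {n : ℕ} (s : ZMod n) (v : ZMod n → ℝ) : ZMod n → ℝ := fun i => v (i + s)

/-- The reversal `ρ`: `(ρ v) i = v (m - 1 - i)` (note `m - 1 = -1` in `ZMod m`). -/
def revVec {n : ℕ} (v : ZMod n → ℝ) : ZMod n → ℝ := fun i => v (-1 - i)

theorem Int.forall_add_one_sub_eq_iff {G : Type*} [AddCommGroup G] {f g : ℤ → G} :
    (∀ n, f (n + 1) - f n = g (n + 1) - g n) ↔ ∃ c, ∀ n, f n = g n + c := by
  constructor
  · intro h
    have hper : Function.Periodic (f - g) 1 := fun n => by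
      simp only [Pi.sub_apply]
      rw [sub_eq_sub_iff_sub_eq_sub, h]
    refine ⟨f 0 - g 0, fun n => ?_⟩
    have := hper.int_mul_eq n
    simp only [mul_one, Int.cast_id, Pi.sub_apply] at this
    rw [← this]; abel
  · rintro ⟨c, hc⟩ n
    simp only [hc]; abel

theorem Int.range_eq_range_iff_of_strictMono {α : Type*} [LinearOrder α] {f g : ℤ → α}
    (hf : StrictMono f) (hg : StrictMono g) :
    Set.range f = Set.range g ↔ ∃ k, ∀ n, f n = g (n + k) := by
  constructor
  · intro h
    let e : ℤ ≃o ℤ :=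
      ((hf.orderIso f).trans (OrderIso.setCongr _ _ h)).trans (hg.orderIso g).symm
    have hge : ∀ n, g (e n) = f n := fun n =>
      congrArg Subtype.val ((hg.orderIso g).apply_symm_apply ⟨f n, h ▸ ⟨n, rfl⟩⟩)
    have he : ∀ n, e (n + 1) - e n = id (n + 1) - id n := fun n => by
      have := e.map_succ n
      rw [Order.succ_eq_add_one, Order.succ_eq_add_one] at this
      rw [this, id, id]; ring
    obtain ⟨k, hk⟩ := Int.forall_add_one_sub_eq_iff.1 he
    exact ⟨k, fun n => by rw [← hge, hk, id]⟩
  · rintro ⟨k, hk⟩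
    rw [show f = g ∘ (· + k) from funext hk, (add_right_surjective k).range_comp]

namespace PSeq

variable {m : ℕ} (S Q : PSeq m)

/-- The points of `S` in increasing order: writing `n = r + m * q` with `0 ≤ r < m`,
`enum n = p r + l * q`. -/
noncomputable def enum (n : ℤ) : ℝ :=
  letI : NeZero m := ⟨S.m_pos.ne'⟩
  S.p ⟨(n : ZMod m).val, ZMod.val_lt _⟩ + S.l * (n / m : ℤ)

theorem enum_natCast_add_mul {r : ℕ} (hr : r < m) (q : ℤ) :
    S.enum (r + m * q) = S.p ⟨r, hr⟩ + S.l * q := by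
  have hm : (m : ℤ) ≠ 0 := by exact_mod_cast S.m_pos.ne'
  have hval : ((r + m * q : ℤ) : ZMod m).val = r := by
    push_cast
    rw [ZMod.natCast_self, zero_mul, add_zero, ZMod.val_natCast_of_lt hr]
  have hdiv : (r + m * q : ℤ) / m = q := by
    rw [Int.add_mul_ediv_left _ _ hm, Int.ediv_eq_zero_of_lt (Int.natCast_nonneg r)
      (by exact_mod_cast hr), zero_add]
  simp only [enum, hval, hdiv]

theorem enum_add_one_sub (n : ℤ) : S.enum (n + 1) - S.enum n = S.D n := by
  have : NeZero m := ⟨S.m_pos.ne'⟩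
  have hr : (n : ZMod m).val < m := ZMod.val_lt _
  have hn : n = (n : ZMod m).val + m * (n / m) := by rw [ZMod.val_intCast, Int.emod_add_mul_ediv]
  have h0 : S.enum n = S.p ⟨_, hr⟩ + S.l * (n / m : ℤ) := by
    conv_lhs => rw [hn]
    exact S.enum_natCast_add_mul hr _
  rw [D, h0]
  split_ifs with h
  · have h1 : n + 1 = ((n : ZMod m).val + 1 : ℕ) + m * (n / m) := by push_cast; linarith
    rw [h1, S.enum_natCast_add_mul h]
    ring
  · have h1 : n + 1 = (0 : ℕ) + m * (n / m + 1) := by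
      have : (n : ZMod m).val + 1 = m := by omega
      have hm : (m : ℤ) = (n : ZMod m).val + 1 := by exact_mod_cast this.symm
      push_cast; linarith
    rw [h1, S.enum_natCast_add_mul S.m_pos]
    push_cast
    ring

theorem D_pos (i : ZMod m) : 0 < S.D i := by
  have : NeZero m := ⟨S.m_pos.ne'⟩
  rw [D]
  split_ifs
  · exact sub_pos.2 (S.p_strict (Fin.mk_lt_mk.2 (Nat.lt_succ_self _)))
  · linarith [S.p0_nonneg, S.p_lt ⟨i.val, ZMod.val_lt i⟩]

theorem strictMono_enum : StrictMono S.enum :=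
  strictMono_int_of_lt_succ fun n => sub_pos.1 (S.enum_add_one_sub n ▸ S.D_pos n)

theorem range_enum : Set.range S.enum = S.pts := by
  ext x
  constructor
  · rintro ⟨n, rfl⟩
    exact ⟨_, n / m, rfl⟩
  · rintro ⟨⟨r, hr⟩, q, rfl⟩
    exact ⟨r + m * q, S.enum_natCast_add_mul hr q⟩

theorem D_eq_shiftVec_iff (k : ℤ) :
    Q.D = shiftVec k S.D ↔ ∃ c, ∀ n, Q.enum n = S.enum (n + k) + c := by
  rw [← Int.forall_add_one_sub_eq_iff (g := fun n => S.enum (n + k)), funext_iff,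
    ZMod.intCast_surjective.forall]
  refine forall_congr' fun n => ?_
  rw [Q.enum_add_one_sub, add_right_comm, S.enum_add_one_sub, shiftVec, Int.cast_add]

theorem D_eq_shiftVec_revVec_iff (k : ℤ) :
    Q.D = shiftVec k (revVec S.D) ↔ ∃ c, ∀ n, Q.enum n = -S.enum (-(n + k)) + c := by
  rw [← Int.forall_add_one_sub_eq_iff (g := fun n => -S.enum (-(n + k))), funext_iff,
    ZMod.intCast_surjective.forall]
  refine forall_congr' fun n => ?_
  have h := S.enum_add_one_sub (-(n + 1 + k))
  rw [show -(n + 1 + k) + 1 = -(n + k) by ring] at h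
  rw [Q.enum_add_one_sub, neg_sub_neg, h, shiftVec, revVec]
  push_cast
  ring_nf

theorem exists_pts_eq_image_add_iff :
    (∃ t, Q.pts = (fun x => x + t) '' S.pts) ↔ ∃ s : ZMod m, Q.D = shiftVec s S.D := by
  rw [ZMod.intCast_surjective.exists]
  simp_rw [D_eq_shiftVec_iff, ← range_enum, ← Set.range_comp]
  rw [exists_comm]
  refine exists_congr fun t => ?_
  exact Int.range_eq_range_iff_of_strictMono Q.strictMono_enum (S.strictMono_enum.add_const t)

theorem exists_pts_eq_image_neg_add_iff :
    (∃ t, Q.pts = (fun x => -x + t) '' S.pts) ↔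
      ∃ s : ZMod m, Q.D = shiftVec s (revVec S.D) := by
  rw [ZMod.intCast_surjective.exists]
  simp_rw [D_eq_shiftVec_revVec_iff, ← range_enum, ← Set.range_comp]
  rw [exists_comm]
  refine exists_congr fun t => ?_
  rw [← neg_surjective.range_comp ((fun x => -x + t) ∘ S.enum)]
  exact Int.range_eq_range_iff_of_strictMono Q.strictMono_enum
    ((S.strictMono_enum.comp_strictAnti strictMono_id.neg).neg.add_const t)

end PSeq

theorem distance_list_complete_up_to_isometry_general {m : ℕ} (S Q : PSeq m) :
    (∃ (t ε : ℝ), (ε = 1 ∨ ε = -1) ∧ Q.pts = (fun x => ε * x + t) '' S.pts) ↔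
    ∃ s : ZMod m, Q.D = shiftVec s S.D ∨ Q.D = shiftVec s (revVec S.D) := by
  simp only [or_and_right, exists_or, exists_eq_left, one_mul, neg_one_mul]
  rw [S.exists_pts_eq_image_add_iff, S.exists_pts_eq_image_neg_add_iff]

/-- the distance list up to cyclic permutations and reversal (the smallest
distance list SDL) is a complete invariant of periodic sequences up to isometry of `ℝ`. -/
theorem distance_list_complete_up_to_isometry {m : ℕ} (S Q : PSeq m)
    (hS : S.IsMinimal) (hQ : Q.IsMinimal) :
    (∃ (t ε : ℝ), (ε = 1 ∨ ε = -1) ∧ Q.pts = (fun x => ε * x + t) '' S.pts) ↔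
    ∃ s : ZMod m, Q.D = shiftVec s S.D ∨ Q.D = shiftVec s (revVec S.D) :=
  distance_list_complete_up_to_isometry_general S Q
end

section
/- For any periodic sequences S, Q ⊆ ℝ and any integer k ≥ 1, the oriented and unoriented elastic metrics are independent of taking multiples: Elm^o(kS, Q) = Elm^o(S, Q) and Elm(kS, Q) = Elm(S, Q). -/
/-- The Minkowski sup-norm `‖v‖_∞ = max_i |v i|` of a vector indexed by `ZMod n`, `n > 0`. -/
noncomputable def supNorm {n : ℕ} (hn : 0 < n) (v : ZMod n → ℝ) : ℝ :=
  letI : NeZero n := ⟨hn.ne'⟩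
  Finset.univ.sup' (Finset.univ_nonempty_iff.mpr ⟨0⟩) fun i => |v i|

namespace PSeq

/-- The distance list of the multiple `(n / m) S` of a periodic sequence `S` with `m ∣ n`,
i.e. the `(n/m)`-fold concatenation of `D S`, indexed by `ZMod n`. -/
noncomputable def Dc {m : ℕ} (S : PSeq m) (n : ℕ) : ZMod n → ℝ :=
  fun i => S.D ((i.val : ZMod m))

/-- The oriented elastic metric `Elm^o(S,Q)`: with `n = lcm(m₁, m₂)`, the minimum over all
cyclic shifts `s ∈ ZMod n` of `‖D((n/m₁)S) - σ_s(D((n/m₂)Q))‖_∞`. -/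
noncomputable def Elmo {m₁ m₂ : ℕ} (S : PSeq m₁) (Q : PSeq m₂) : ℝ :=
  letI : NeZero (Nat.lcm m₁ m₂) := ⟨(Nat.lcm_pos S.m_pos Q.m_pos).ne'⟩
  Finset.univ.inf' (Finset.univ_nonempty_iff.mpr ⟨0⟩)
    fun s : ZMod (Nat.lcm m₁ m₂) =>
      supNorm (Nat.lcm_pos S.m_pos Q.m_pos)
        fun i => S.Dc (Nat.lcm m₁ m₂) i - shiftVec s (Q.Dc (Nat.lcm m₁ m₂)) i

/-- The unoriented elastic metric `Elm(S,Q)`: the minimum over all `2n` permutations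
`σ_s` and `σ_s ∘ ρ` of `‖D((n/m₁)S) - σ(D((n/m₂)Q))‖_∞`, where `n = lcm(m₁, m₂)`. -/
noncomputable def Elm {m₁ m₂ : ℕ} (S : PSeq m₁) (Q : PSeq m₂) : ℝ :=
  letI : NeZero (Nat.lcm m₁ m₂) := ⟨(Nat.lcm_pos S.m_pos Q.m_pos).ne'⟩
  min
    (Finset.univ.inf' (Finset.univ_nonempty_iff.mpr ⟨0⟩)
      fun s : ZMod (Nat.lcm m₁ m₂) =>
        supNorm (Nat.lcm_pos S.m_pos Q.m_pos)
          fun i => S.Dc (Nat.lcm m₁ m₂) i - shiftVec s (Q.Dc (Nat.lcm m₁ m₂)) i)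
    (Finset.univ.inf' (Finset.univ_nonempty_iff.mpr ⟨0⟩)
      fun s : ZMod (Nat.lcm m₁ m₂) =>
        supNorm (Nat.lcm_pos S.m_pos Q.m_pos)
          fun i => S.Dc (Nat.lcm m₁ m₂) i - shiftVec s (revVec (Q.Dc (Nat.lcm m₁ m₂))) i)

end PSeq

namespace PSeq

/-- The multiple `k S` of a periodic sequence: period `k * l` and the `k * m`-point motif
`{p i + j * l : 0 ≤ i < m, 0 ≤ j < k}`. -/
def mult {m : ℕ} (S : PSeq m) (k : ℕ) (hk : 0 < k) : PSeq (k * m) where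
  m_pos := Nat.mul_pos hk S.m_pos
  l := (k : ℝ) * S.l
  l_pos := mul_pos (by exact_mod_cast hk) S.l_pos
  p := fun r => S.p ⟨r.val % m, Nat.mod_lt _ S.m_pos⟩ + ((r.val / m : ℕ) : ℝ) * S.l
  p_strict := by
    have hple : ∀ i : Fin m, 0 ≤ S.p i := fun i =>
      le_trans S.p0_nonneg (S.p_strict.monotone (by simp [Fin.le_def]))
    intro r r' hlt
    have hab : r.val < r'.val := hlt
    have hdiv : r.val / m ≤ r'.val / m := Nat.div_le_div_right hab.le
    show S.p ⟨r.val % m, Nat.mod_lt _ S.m_pos⟩ + ((r.val / m : ℕ) : ℝ) * S.l <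
      S.p ⟨r'.val % m, Nat.mod_lt _ S.m_pos⟩ + ((r'.val / m : ℕ) : ℝ) * S.l
    rcases lt_or_eq_of_le hdiv with hq | heq
    · have h1 : S.p ⟨r.val % m, Nat.mod_lt _ S.m_pos⟩ < S.l := S.p_lt _
      have h2 : (0:ℝ) ≤ S.p ⟨r'.val % m, Nat.mod_lt _ S.m_pos⟩ := hple _
      have h3 : ((r.val / m : ℕ) : ℝ) + 1 ≤ ((r'.val / m : ℕ) : ℝ) := by exact_mod_cast hq
      nlinarith [S.l_pos]
    · have hmod : r.val % m < r'.val % m := by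
        have e1 := Nat.div_add_mod r.val m
        have e2 := Nat.div_add_mod r'.val m
        rw [heq] at e1
        omega
      have hpp := S.p_strict
        (show (⟨r.val % m, Nat.mod_lt _ S.m_pos⟩ : Fin m) <
          ⟨r'.val % m, Nat.mod_lt _ S.m_pos⟩ from hmod)
      rw [heq]
      linarith
  p0_nonneg := by
    show (0:ℝ) ≤ S.p ⟨0 % m, Nat.mod_lt _ S.m_pos⟩ + ((0 / m : ℕ) : ℝ) * S.l
    simp only [Nat.zero_mod, Nat.zero_div, Nat.cast_zero, zero_mul, add_zero]
    exact S.p0_nonneg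
  p_lt := by
    intro r
    show S.p ⟨r.val % m, Nat.mod_lt _ S.m_pos⟩ + ((r.val / m : ℕ) : ℝ) * S.l < (k : ℝ) * S.l
    have h1 : S.p ⟨r.val % m, Nat.mod_lt _ S.m_pos⟩ < S.l := S.p_lt _
    have h2 : r.val / m < k :=
      Nat.div_lt_of_lt_mul (lt_of_lt_of_eq r.isLt (Nat.mul_comm k m))
    have h3 : ((r.val / m : ℕ) : ℝ) + 1 ≤ (k : ℝ) := by exact_mod_cast h2
    nlinarith [S.l_pos]

end PSeq

open Function

namespace Finset

variable {α β γ : Type*} [Fintype α] [Fintype β]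

theorem sup'_univ_comp_of_surjective [SemilatticeSup γ] {π : α → β} (hπ : Surjective π)
    (f : β → γ) (hα : (univ : Finset α).Nonempty) (hβ : (univ : Finset β).Nonempty) :
    univ.sup' hα (f ∘ π) = univ.sup' hβ f := by
  classical
  rw [← sup'_image (by simpa [image_univ_of_surjective hπ] using hβ)]
  exact sup'_congr _ (image_univ_of_surjective hπ) fun _ _ => rfl

theorem inf'_univ_comp_of_surjective [SemilatticeInf γ] {π : α → β} (hπ : Surjective π)
    (f : β → γ) (hα : (univ : Finset α).Nonempty) (hβ : (univ : Finset β).Nonempty) :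
    univ.inf' hα (f ∘ π) = univ.inf' hβ f :=
  sup'_univ_comp_of_surjective (γ := γᵒᵈ) hπ f hα hβ

end Finset

theorem supNorm_comp_surjective {n d : ℕ} (hn : 0 < n) (hd : 0 < d) {π : ZMod n → ZMod d}
    (hπ : Surjective π) (v : ZMod d → ℝ) :
    supNorm hn (v ∘ π) = supNorm hd v := by
  have : NeZero n := ⟨hn.ne'⟩
  have : NeZero d := ⟨hd.ne'⟩
  exact Finset.sup'_univ_comp_of_surjective hπ (fun i => |v i|) _ _

noncomputable def minShiftDist {n : ℕ} (hn : 0 < n) (f g : ZMod n → ℝ) : ℝ :=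
  letI : NeZero n := ⟨hn.ne'⟩
  Finset.univ.inf' (Finset.univ_nonempty_iff.mpr ⟨0⟩) fun s =>
    supNorm hn fun i => f i - shiftVec s g i

theorem minShiftDist_comp_castHom {n d : ℕ} (hn : 0 < n) (hd : 0 < d) (hdn : d ∣ n)
    (f g : ZMod d → ℝ) :
    minShiftDist hn (f ∘ ZMod.castHom hdn (ZMod d)) (g ∘ ZMod.castHom hdn (ZMod d)) =
      minShiftDist hd f g := by
  have : NeZero n := ⟨hn.ne'⟩
  have : NeZero d := ⟨hd.ne'⟩
  set π := ZMod.castHom hdn (ZMod d)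
  have hπ : Surjective π := ZMod.castHom_surjective hdn
  have shift_comp (s : ZMod n) :
      supNorm hn (fun i => (f ∘ π) i - shiftVec s (g ∘ π) i) =
        supNorm hd (fun j => f j - shiftVec (π s) g j) := by
    rw [← supNorm_comp_surjective hn hd hπ]
    simp only [shiftVec, comp_def, map_add]
  dsimp only [minShiftDist]
  simp only [shift_comp]
  exact Finset.inf'_univ_comp_of_surjective hπ
    (fun t => supNorm hd fun j => f j - shiftVec t g j) _ _

theorem revVec_comp_castHom {n d : ℕ} (hdn : d ∣ n) (g : ZMod d → ℝ) :
    revVec (g ∘ ZMod.castHom hdn (ZMod d)) = revVec g ∘ ZMod.castHom hdn (ZMod d) := by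
  funext i
  simp only [revVec, comp_apply, map_sub, map_neg, map_one]

namespace PSeq

variable {m : ℕ}

theorem Elmo_eq_minShiftDist {m₁ m₂ : ℕ} (S : PSeq m₁) (Q : PSeq m₂) :
    Elmo S Q = minShiftDist (Nat.lcm_pos S.m_pos Q.m_pos)
      (S.Dc (Nat.lcm m₁ m₂)) (Q.Dc (Nat.lcm m₁ m₂)) :=
  rfl

theorem Elm_eq_min_minShiftDist {m₁ m₂ : ℕ} (S : PSeq m₁) (Q : PSeq m₂) :
    Elm S Q = min
      (minShiftDist (Nat.lcm_pos S.m_pos Q.m_pos) (S.Dc (Nat.lcm m₁ m₂)) (Q.Dc (Nat.lcm m₁ m₂)))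
      (minShiftDist (Nat.lcm_pos S.m_pos Q.m_pos) (S.Dc (Nat.lcm m₁ m₂))
        (revVec (Q.Dc (Nat.lcm m₁ m₂)))) :=
  rfl

noncomputable def point (S : PSeq m) (r : ℕ) : ℝ :=
  S.p ⟨r % m, Nat.mod_lt _ S.m_pos⟩ + ((r / m : ℕ) : ℝ) * S.l

theorem point_add_mul (S : PSeq m) (r q : ℕ) :
    S.point (r + m * q) = S.point r + q * S.l := by
  have hmq : (r + m * q) / m = r / m + q := by
    rw [Nat.add_mul_div_left _ _ S.m_pos]
  simp only [point, Nat.add_mul_mod_self_left, hmq, Nat.cast_add]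
  ring

theorem point_of_lt (S : PSeq m) {r : ℕ} (hr : r < m) : S.point r = S.p ⟨r, hr⟩ := by
  simp [point, Nat.mod_eq_of_lt hr, Nat.div_eq_of_lt hr]

theorem D_eq_point_sub (S : PSeq m) [NeZero m] (i : ZMod m) :
    S.D i = S.point (i.val + 1) - S.point i.val := by
  rw [D, point_of_lt S i.val_lt]
  split_ifs with h
  · rw [point_of_lt S h]
  · have hm : i.val + 1 = 0 + m * 1 := by have := i.val_lt; omega
    rw [hm, point_add_mul, point_of_lt S S.m_pos, Nat.cast_one, one_mul]

theorem D_natCast (S : PSeq m) (r : ℕ) : S.D r = S.point (r + 1) - S.point r := by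
  have : NeZero m := ⟨S.m_pos.ne'⟩
  rw [D_eq_point_sub, ZMod.val_natCast]
  conv_rhs => rw [← Nat.mod_add_div r m, add_right_comm, point_add_mul, point_add_mul]
  ring

theorem point_mult (S : PSeq m) (k : ℕ) (hk : 0 < k) (r : ℕ) :
    (S.mult k hk).point r = S.point r := by
  have hdecomp : r = r % (k * m) + m * (k * (r / (k * m))) := by
    rw [← mul_assoc, mul_comm m k, Nat.mod_add_div]
  conv_rhs => rw [hdecomp, point_add_mul]
  simp only [point, mult, Nat.cast_mul]
  ring

theorem Dc_mult (S : PSeq m) (k : ℕ) (hk : 0 < k) (n : ℕ) : (S.mult k hk).Dc n = S.Dc n := by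
  funext i
  simp only [Dc, D_natCast, point_mult]

theorem Dc_eq_comp_castHom (S : PSeq m) {d n : ℕ} [NeZero n] (hmd : m ∣ d) (hdn : d ∣ n) :
    S.Dc n = S.Dc d ∘ ZMod.castHom hdn (ZMod d) := by
  have : NeZero d := ⟨(Nat.pos_of_dvd_of_pos hdn (NeZero.pos n)).ne'⟩
  funext i
  simp only [Dc, comp_apply, ZMod.castHom_apply, ZMod.natCast_val]
  exact congrArg S.D (RingHom.congr_fun (ZMod.castHom_comp hmd hdn) i).symm

end PSeq

/-- the oriented and unoriented elastic metrics are independent of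
taking multiples: `Elm^o(kS,Q) = Elm^o(S,Q)` and `Elm(kS,Q) = Elm(S,Q)`. -/
theorem elastic_metrics_of_multiple {m₁ m₂ : ℕ} (S : PSeq m₁) (Q : PSeq m₂)
    (k : ℕ) (hk : 0 < k) :
    PSeq.Elmo (S.mult k hk) Q = PSeq.Elmo S Q ∧
    PSeq.Elm (S.mult k hk) Q = PSeq.Elm S Q := by
  have hL : Nat.lcm m₁ m₂ ∣ Nat.lcm (k * m₁) m₂ :=
    Nat.lcm_dvd ((dvd_mul_left m₁ k).trans (Nat.dvd_lcm_left _ _)) (Nat.dvd_lcm_right _ _)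
  have : NeZero (Nat.lcm (k * m₁) m₂) := ⟨(Nat.lcm_pos (S.mult k hk).m_pos Q.m_pos).ne'⟩
  have hS : (S.mult k hk).Dc (Nat.lcm (k * m₁) m₂) =
      S.Dc (Nat.lcm m₁ m₂) ∘ ZMod.castHom hL (ZMod (Nat.lcm m₁ m₂)) := by
    rw [PSeq.Dc_mult, S.Dc_eq_comp_castHom (Nat.dvd_lcm_left _ _)]
  have hQ := Q.Dc_eq_comp_castHom (Nat.dvd_lcm_right _ _) hL
  have hpos := Nat.lcm_pos S.m_pos Q.m_pos
  rw [PSeq.Elmo_eq_minShiftDist, PSeq.Elmo_eq_minShiftDist, PSeq.Elm_eq_min_minShiftDist,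
    PSeq.Elm_eq_min_minShiftDist, hS, hQ, revVec_comp_castHom,
    minShiftDist_comp_castHom _ hpos, minShiftDist_comp_castHom _ hpos]
  exact ⟨rfl, rfl⟩
end
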